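/- Let (G, w) be an edge-weighted simple graph on a finite type V and let v ∈ V. Let K = { g ∈ S_G : g(u) = 0 for all u ≠ v }, a ℤ-submodule of S_G. Then S_G is isomorphic as a ℤ-module to the direct sum S_{G_v} ⊕ K, via a splitting of the restriction map g ↦ g|_{V \ {v}}. -/

import Mathlib

/-- An integer spline on the edge-weighted graph `(G, w)`: a vertex labeling `g : V → ℤ` such
that for every edge `{u, x}` of `G`, the weight `w {u, x}` divides `g u - g x` in `ℤ`. -/
def IsSpline {V : Type*} (G : SimpleGraph V) (w : Sym2 V → ℕ) (g : V → ℤ) : Prop :=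
  ∀ u x : V, G.Adj u x → (w s(u, x) : ℤ) ∣ g u - g x

/-- The ℤ-module of integer splines on `(G, w)`, as a submodule of `V → ℤ`. -/
def splineSubmodule {V : Type*} (G : SimpleGraph V) (w : Sym2 V → ℕ) :
    Submodule ℤ (V → ℤ) where
  carrier := {g | IsSpline G w g}
  add_mem' := by
    intro a b ha hb u x hux
    simpa [sub_add_sub_comm] using dvd_add (ha u x hux) (hb u x hux)
  zero_mem' := by intro u x hux; simp
  smul_mem' := by
    intro c g hg u x hux
    simpa [mul_sub] using (hg u x hux).mul_left c

/-- The star-clique operation at `v`: delete `v` and all edges at `v`, and join every pair of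
distinct former neighbors of `v` by an edge (keeping all edges of `G` not incident to `v`). -/
def starClique {V : Type*} (G : SimpleGraph V) (v : V) :
    SimpleGraph {u : V // u ≠ v} where
  Adj u x := u ≠ x ∧ (G.Adj ↑u ↑x ∨ (G.Adj ↑u v ∧ G.Adj ↑x v))
  symm := ⟨by
    rintro u x ⟨h1, h2⟩
    refine ⟨h1.symm, ?_⟩
    rcases h2 with h | ⟨ha, hb⟩
    · exact Or.inl h.symm
    · exact Or.inr ⟨hb, ha⟩⟩
  loopless := ⟨fun u h => h.1 rfl⟩

instance {V : Type*} [DecidableEq V] (G : SimpleGraph V) [DecidableRel G.Adj] (v : V) :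
    DecidableRel (starClique G v).Adj :=
  fun u x => decidable_of_iff (u ≠ x ∧ (G.Adj ↑u ↑x ∨ (G.Adj ↑u v ∧ G.Adj ↑x v))) Iff.rfl

/-- The edge weights of the collapsed graph `(G_v, w_v)`: for distinct `u, x ≠ v`, the weight is
`w {u, x}` if `u, x` are adjacent in `G` but not both adjacent to `v`;
`gcd (w {u, v}) (w {x, v})` if `u, x` are not adjacent in `G` but both adjacent to `v`; and
`lcm (w {u, x}) (gcd (w {u, v}) (w {x, v}))` if both. -/
def collapseWeight {V : Type*} (G : SimpleGraph V) [DecidableRel G.Adj]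
    (w : Sym2 V → ℕ) (v : V) : Sym2 {u : V // u ≠ v} → ℕ :=
  Sym2.lift ⟨fun u x =>
    if G.Adj ↑u ↑x then
      if G.Adj ↑u v ∧ G.Adj ↑x v then
        Nat.lcm (w s(↑u, ↑x)) (Nat.gcd (w s(↑u, v)) (w s(↑x, v)))
      else w s(↑u, ↑x)
    else Nat.gcd (w s(↑u, v)) (w s(↑x, v)),
    by
      intro u x
      have hadj : G.Adj (↑u : V) ↑x ↔ G.Adj (↑x : V) ↑u := G.adj_comm _ _
      have hs : s((↑u : V), (↑x : V)) = s((↑x : V), (↑u : V)) := Sym2.eq_swap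
      have hg : Nat.gcd (w s((↑u : V), v)) (w s((↑x : V), v)) =
          Nat.gcd (w s((↑x : V), v)) (w s((↑u : V), v)) := Nat.gcd_comm _ _
      have ha : (G.Adj (↑u : V) v ∧ G.Adj (↑x : V) v) ↔ (G.Adj (↑x : V) v ∧ G.Adj (↑u : V) v) :=
        and_comm
      dsimp only
      by_cases h1 : G.Adj (↑u : V) ↑x
      · by_cases h2 : G.Adj (↑u : V) v ∧ G.Adj (↑x : V) v
        · rw [if_pos h1, if_pos (hadj.mp h1), if_pos h2, if_pos (ha.mp h2), hs, hg]
        · rw [if_pos h1, if_pos (hadj.mp h1), if_neg h2, if_neg (fun hc => h2 (ha.mpr hc)), hs]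
      · rw [if_neg h1, if_neg (fun hc => h1 (hadj.mpr hc)), hg]⟩

/-- The submodule `K = { g ∈ S_G : g u = 0 for all u ≠ v }` of the spline module. -/
def supportedAtV {V : Type*} (G : SimpleGraph V) (w : Sym2 V → ℕ) (v : V) :
    Submodule ℤ (splineSubmodule G w) where
  carrier := {g | ∀ u : V, u ≠ v → (g : V → ℤ) u = 0}
  add_mem' := by
    intro a b ha hb u hu
    simp [ha u hu, hb u hu]
  zero_mem' := by intro u hu; simp
  smul_mem' := by
    intro c g hg u hu
    simp [hg u hu]

/-!
Restriction to `V \ {v}` maps `S_G` onto `S_{G_v}`. Indeed, extending a spline `h` on `G_v` to `G`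
means choosing `g v` with `g v ≡ h u [mod w {u, v}]` for every neighbour `u` of `v`, and the
collapsed weights encode exactly the pairwise compatibility conditions
`gcd (w {u, v}) (w {x, v}) ∣ h u - h x` under which the Chinese remainder theorem for non-coprime
moduli solves this system. The kernel of restriction is `K`, and `S_{G_v}`, a submodule of the
free module `ℤ^(V \ {v})`, is free; hence `0 → K → S_G → S_{G_v} → 0` splits.
-/

theorem Nat.gcd_lcm_dvd_lcm_gcd (a b c : ℕ) :
    gcd a (lcm b c) ∣ lcm (gcd a b) (gcd a c) := by
  rcases eq_or_ne a 0 with rfl | ha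
  · simp
  rcases eq_or_ne b 0 with rfl | hb
  · simpa using Nat.dvd_lcm_left _ _
  rcases eq_or_ne c 0 with rfl | hc
  · simpa using Nat.dvd_lcm_right _ _
  have hab : gcd a b ≠ 0 := Nat.gcd_ne_zero_left ha
  have hac : gcd a c ≠ 0 := Nat.gcd_ne_zero_left ha
  refine (Nat.factorization_le_iff_dvd (Nat.gcd_ne_zero_left ha)
    (Nat.lcm_ne_zero hab hac)).mp fun p => ?_
  simp only [Nat.factorization_gcd ha (Nat.lcm_ne_zero hb hc), Nat.factorization_lcm hb hc,
    Nat.factorization_lcm hab hac, Nat.factorization_gcd ha hb, Nat.factorization_gcd ha hc,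
    Finsupp.inf_apply, Finsupp.sup_apply]
  omega

theorem Nat.gcd_finset_lcm_dvd {ι : Type*} {m d : ℕ} {s : Finset ι} {n : ι → ℕ}
    (h : ∀ i ∈ s, gcd m (n i) ∣ d) : gcd m (s.lcm n) ∣ d := by
  classical
  induction s using Finset.induction_on with
  | empty => simp
  | insert j s _ ih =>
    rw [Finset.lcm_insert]
    exact (Nat.gcd_lcm_dvd_lcm_gcd m (n j) _).trans <| Nat.lcm_dvd
      (h j (s.mem_insert_self j)) (ih fun i hi => h i (Finset.mem_insert_of_mem hi))

theorem Int.exists_dvd_add_mul_of_gcd_dvd {m l : ℕ} {d : ℤ} (h : (Nat.gcd m l : ℤ) ∣ d) :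
    ∃ t : ℤ, (m : ℤ) ∣ d + t * l := by
  rw [← Int.gcd_natCast_natCast, Int.coe_gcd, gcd_dvd_iff_exists] at h
  obtain ⟨x, y, rfl⟩ := h
  exact ⟨-y, x, by ring⟩

/-- The Chinese remainder theorem for moduli that need not be coprime. -/
theorem Int.exists_forall_dvd_sub_of_gcd_dvd_sub {ι : Type*} (s : Finset ι) (n : ι → ℕ)
    (a : ι → ℤ) (h : ∀ i ∈ s, ∀ j ∈ s, (Nat.gcd (n i) (n j) : ℤ) ∣ a i - a j) :
    ∃ x : ℤ, ∀ i ∈ s, (n i : ℤ) ∣ x - a i := by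
  classical
  induction s using Finset.induction_on with
  | empty => exact ⟨0, by simp⟩
  | insert j s _ ih =>
    obtain ⟨x, hx⟩ := ih fun i hi k hk =>
      h i (Finset.mem_insert_of_mem hi) k (Finset.mem_insert_of_mem hk)
    -- Solutions for `s` are the classes `x + t * lcm s`; one of them is right modulo `n j`.
    have hgcd : (Nat.gcd (n j) (s.lcm n) : ℤ) ∣ x - a j := by
      refine Int.natCast_dvd.mpr (Nat.gcd_finset_lcm_dvd fun i hi => Int.natCast_dvd.mp ?_)
      have hji := h j (s.mem_insert_self j) i (Finset.mem_insert_of_mem hi)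
      have hxi := (Int.natCast_dvd_natCast.mpr (Nat.gcd_dvd_right (n j) (n i))).trans (hx i hi)
      simpa using dvd_sub hxi hji
    obtain ⟨t, ht⟩ := Int.exists_dvd_add_mul_of_gcd_dvd hgcd
    refine ⟨x + t * (s.lcm n : ℕ), fun i hi => ?_⟩
    rw [add_sub_right_comm]
    rcases Finset.mem_insert.mp hi with rfl | hi
    · exact ht
    · have hL : (n i : ℤ) ∣ (s.lcm n : ℕ) := Int.natCast_dvd_natCast.mpr (Finset.dvd_lcm hi)
      exact dvd_add (hx i hi) (hL.mul_left t)

section Spline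

variable {V : Type*} {G : SimpleGraph V} {w : Sym2 V → ℕ} {v : V}

theorem IsSpline.natCast_gcd_dvd_sub {g : V → ℤ} (hg : IsSpline G w g) {p q : V}
    (hp : G.Adj p v) (hq : G.Adj q v) : (Nat.gcd (w s(p, v)) (w s(q, v)) : ℤ) ∣ g p - g q := by
  have hpv := (Int.natCast_dvd_natCast.mpr (Nat.gcd_dvd_left _ (w s(q, v)))).trans (hg p v hp)
  have hqv := (Int.natCast_dvd_natCast.mpr (Nat.gcd_dvd_right (w s(p, v)) _)).trans (hg q v hq)
  simpa using dvd_sub hpv hqv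

variable [DecidableRel G.Adj]

theorem natCast_collapseWeight_dvd_iff {u x : {u : V // u ≠ v}}
    (hux : G.Adj u x ∨ G.Adj u v ∧ G.Adj x v) {d : ℤ} :
    (collapseWeight G w v s(u, x) : ℤ) ∣ d ↔
      (G.Adj u x → (w s(u, x) : ℤ) ∣ d) ∧
        (G.Adj u v → G.Adj x v → (Nat.gcd (w s(u, v)) (w s(x, v)) : ℤ) ∣ d) := by
  rw [collapseWeight, Sym2.lift_mk]
  dsimp only
  split_ifs with hadj hboth
  · simp only [Int.natCast_dvd, Nat.lcm_dvd_iff, hadj, hboth.1, hboth.2, forall_const]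
  · tauto
  · tauto

theorem IsSpline.collapse {g : V → ℤ} (hg : IsSpline G w g) :
    IsSpline (starClique G v) (collapseWeight G w v) (fun u => g u) :=
  fun u x hux => (natCast_collapseWeight_dvd_iff hux.2).mpr
    ⟨hg u x, fun hu hx => hg.natCast_gcd_dvd_sub hu hx⟩

theorem IsSpline.dvd_sub_of_collapse {h : {u : V // u ≠ v} → ℤ}
    (hh : IsSpline (starClique G v) (collapseWeight G w v) h) {u x : {u : V // u ≠ v}}
    (hux : G.Adj u x) : (w s(u, x) : ℤ) ∣ h u - h x :=
  ((natCast_collapseWeight_dvd_iff (.inl hux)).mp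
    (hh u x ⟨fun h => hux.ne (congrArg Subtype.val h), .inl hux⟩)).1 hux

theorem IsSpline.natCast_gcd_dvd_sub_of_collapse {h : {u : V // u ≠ v} → ℤ}
    (hh : IsSpline (starClique G v) (collapseWeight G w v) h)
    {u x : {u : V // u ≠ v}} (hu : G.Adj u v) (hx : G.Adj x v) :
    (Nat.gcd (w s(u, v)) (w s(x, v)) : ℤ) ∣ h u - h x := by
  rcases eq_or_ne u x with rfl | hne
  · simp
  exact ((natCast_collapseWeight_dvd_iff (.inr ⟨hu, hx⟩)).mp
    (hh u x ⟨hne, .inr ⟨hu, hx⟩⟩)).2 hu hx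

theorem IsSpline.extend_of_collapse [DecidableEq V] {h : {u : V // u ≠ v} → ℤ}
    (hh : IsSpline (starClique G v) (collapseWeight G w v) h) {x : ℤ}
    (hx : ∀ u : {u : V // u ≠ v}, G.Adj u v → (w s(↑u, v) : ℤ) ∣ x - h u) :
    IsSpline G w (fun u => if hu : u = v then x else h ⟨u, hu⟩) := by
  intro p q hpq
  by_cases hp : p = v <;> by_cases hq : q = v
  · exact absurd (hp.trans hq.symm) hpq.ne
  · subst hp
    simpa [hq, Sym2.eq_swap] using hx ⟨q, hq⟩ hpq.symm
  · subst hq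
    simpa [hp, dvd_sub_comm] using hx ⟨p, hp⟩ hpq
  · simpa [hp, hq] using hh.dvd_sub_of_collapse (u := ⟨p, hp⟩) (x := ⟨q, hq⟩) hpq

theorem IsSpline.exists_extension_of_collapse [Finite V] {h : {u : V // u ≠ v} → ℤ}
    (hh : IsSpline (starClique G v) (collapseWeight G w v) h) :
    ∃ g : V → ℤ, IsSpline G w g ∧ ∀ u : {u : V // u ≠ v}, g u = h u := by
  classical
  have := Fintype.ofFinite V
  obtain ⟨x, hx⟩ := Int.exists_forall_dvd_sub_of_gcd_dvd_sub
    (Finset.univ.filter fun u : {u : V // u ≠ v} => G.Adj u v) (fun u => w s(↑u, v)) h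
    fun i hi j hj => hh.natCast_gcd_dvd_sub_of_collapse (Finset.mem_filter.mp hi).2
      (Finset.mem_filter.mp hj).2
  exact ⟨_, hh.extend_of_collapse fun u hu => hx u (by simpa using hu), fun u => dif_neg u.2⟩

variable (G w v)

def splineRestrict :
    splineSubmodule G w →ₗ[ℤ] splineSubmodule (starClique G v) (collapseWeight G w v) where
  toFun g := ⟨fun u => (g : V → ℤ) u, IsSpline.collapse g.2⟩
  map_add' _ _ := rfl
  map_smul' _ _ := rfl

theorem splineRestrict_surjective [Finite V] : Function.Surjective (splineRestrict G w v) := by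
  intro h
  obtain ⟨g, hg, hgh⟩ := IsSpline.exists_extension_of_collapse h.2
  exact ⟨⟨g, hg⟩, Subtype.ext (funext hgh)⟩

theorem exact_subtype_splineRestrict :
    Function.Exact (supportedAtV G w v).subtype (splineRestrict G w v) := by
  intro g
  constructor
  · intro hg
    exact ⟨⟨g, fun u hu => congrFun (congrArg Subtype.val hg) ⟨u, hu⟩⟩, rfl⟩
  · rintro ⟨k, rfl⟩
    exact Subtype.ext (funext fun u => k.2 u u.2)

end Spline

theorem spline_module_direct_sum_general {V : Type*} [Fintype V]
    (G : SimpleGraph V) [DecidableRel G.Adj] (w : Sym2 V → ℕ) (v : V) :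
    ∃ e : splineSubmodule G w ≃ₗ[ℤ]
        (splineSubmodule (starClique G v) (collapseWeight G w v) × supportedAtV G w v),
      ∀ g : splineSubmodule G w, ∀ u : {u : V // u ≠ v},
        (((e g).1 : {u : V // u ≠ v} → ℤ) u) = (g : V → ℤ) ↑u := by
  obtain ⟨σ, hσ⟩ := (splineRestrict G w v).exists_rightInverse_of_surjective
    (LinearMap.range_eq_top.mpr (splineRestrict_surjective G w v))
  obtain ⟨e, -, he⟩ := (exact_subtype_splineRestrict G w v).splitSurjectiveEquiv
    (supportedAtV G w v).injective_subtype ⟨σ, hσ⟩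
  refine ⟨e.trans (LinearEquiv.prodComm ℤ _ _), fun g u => ?_⟩
  change _ = ((splineRestrict G w v g : _) : {u : V // u ≠ v} → ℤ) u
  rw [he]
  rfl

/-- `S_G ≅ S_{G_v} ⊕ K` as ℤ-modules, via a splitting of the restriction map
`g ↦ g|_{V \ {v}}`: there is a ℤ-module isomorphism whose first component is restriction. -/
theorem spline_module_direct_sum {V : Type*} [Fintype V] [DecidableEq V]
    (G : SimpleGraph V) [DecidableRel G.Adj] (w : Sym2 V → ℕ)
    (hw : ∀ e ∈ G.edgeSet, 0 < w e) (v : V) :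
    ∃ e : splineSubmodule G w ≃ₗ[ℤ]
        (splineSubmodule (starClique G v) (collapseWeight G w v) × supportedAtV G w v),
      ∀ g : splineSubmodule G w, ∀ u : {u : V // u ≠ v},
        (((e g).1 : {u : V // u ≠ v} → ℤ) u) = (g : V → ℤ) ↑u :=
  spline_module_direct_sum_general G w v
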